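/- Let G be a finite group that is n-Engel for some n, meaning [x, _n y] = 1 for all x, y ∈ G. Then G is nilpotent (Zorn's theorem). -/

import Mathlib

open scoped commutatorElement

/-- Left-normed Engel commutator: `engel x y 0 = x`, `engel x y (n+1) = [engel x y n, y]`. -/
def engel {G : Type*} [Group G] (x y : G) : ℕ → G
  | 0 => x
  | n + 1 => ⁅engel x y n, y⁆

section Aux

universe u

variable {G : Type*} [Group G]

theorem engel_map {H : Type*} [Group H] (f : G →* H) (x y : G) :
    ∀ n : ℕ, f (engel x y n) = engel (f x) (f y) n
  | 0 => rfl
  | n + 1 => by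
      show f ⁅engel x y n, y⁆ = ⁅engel (f x) (f y) n, f y⁆
      rw [map_commutatorElement, engel_map f x y n]

theorem engel_subgroup {n : ℕ} (h : ∀ x y : G, engel x y n = 1) (M : Subgroup G)
    (x y : M) : engel x y n = 1 := by
  apply M.subtype_injective
  rw [engel_map, map_one]
  exact h x y

theorem engel_surj {H : Type*} [Group H] (f : G →* H) (hf : Function.Surjective f)
    {n : ℕ} (h : ∀ x y : G, engel x y n = 1) (a b : H) : engel a b n = 1 := by
  obtain ⟨x, rfl⟩ := hf a
  obtain ⟨y, rfl⟩ := hf b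
  rw [← engel_map, h, map_one]

theorem cardlt [Finite G] (H K : Subgroup G) (h : H < K) : Nat.card H < Nat.card K := by
  have : (H : Set G) ⊂ (K : Set G) := by exact_mod_cast h
  have := Set.ncard_lt_ncard this (Set.toFinite _)
  rwa [← Nat.card_coe_set_eq, ← Nat.card_coe_set_eq] at this

theorem cardlt_top [Finite G] (H : Subgroup G) (h : H ≠ ⊤) : Nat.card H < Nat.card G := by
  have := cardlt H ⊤ (lt_top_iff_ne_top.mpr h)
  rwa [show Nat.card (⊤ : Subgroup G) = Nat.card G from
    Nat.card_congr Subgroup.topEquiv.toEquiv] at this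

theorem exists_coatom_ge [Finite G] (H : Subgroup G) (hH : H ≠ ⊤) :
    ∃ M : Subgroup G, IsCoatom M ∧ H ≤ M := by
  obtain ⟨M, hM, hmax⟩ := Set.Finite.exists_maximalFor (fun K : Subgroup G => Nat.card K)
    {K : Subgroup G | H ≤ K ∧ K ≠ ⊤} (Set.toFinite _) ⟨H, le_rfl, hH⟩
  refine ⟨M, ⟨hM.2, fun K hK => ?_⟩, hM.1⟩
  by_contra hKtop
  have hlt : Nat.card M < Nat.card K := cardlt _ _ hK
  have h2 : Nat.card K ≤ Nat.card M := hmax ⟨hM.1.trans hK.le, hKtop⟩ hlt.le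
  omega

/-- Normalizer growth inside a nilpotent subgroup. -/
theorem exists_gt_le_normalizer [Finite G] (M D : Subgroup G)
    (hnil : Group.IsNilpotent M) (hlt : D < M) :
    ∃ N : Subgroup G, D < N ∧ N ≤ M ∧ N ≤ (Subgroup.normalizer (D : Set G)) := by
  have hDM : D ≤ M := hlt.le
  have hD'top : D.subgroupOf M < ⊤ := by
    rw [lt_top_iff_ne_top]
    intro h
    exact hlt.ne (le_antisymm hDM (Subgroup.subgroupOf_eq_top.mp h))
  have nc : NormalizerCondition M := @normalizerCondition_of_isNilpotent _ _ hnil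
  have h2 : D.subgroupOf M < (Subgroup.normalizer ((D.subgroupOf M) : Set _)) := nc _ hD'top
  refine ⟨((Subgroup.normalizer ((D.subgroupOf M) : Set _))).map M.subtype, ?_, Subgroup.map_subtype_le _, ?_⟩
  · have hDeq : (D.subgroupOf M).map M.subtype = D := by
      rw [Subgroup.subgroupOf_map_subtype, inf_eq_left.mpr hDM]
    have hlt2 : (D.subgroupOf M).map M.subtype < ((Subgroup.normalizer ((D.subgroupOf M) : Set _))).map M.subtype := by
      refine lt_of_le_of_ne (Subgroup.map_subtype_le_map_subtype.mpr h2.le) ?_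
      intro h
      exact h2.ne (Subgroup.map_injective M.subtype_injective h)
    rwa [hDeq] at hlt2
  · rintro x hx
    obtain ⟨x', hx', rfl⟩ := Subgroup.mem_map.mp hx
    rw [Subgroup.mem_normalizer_iff] at hx' ⊢
    intro g
    constructor
    · intro hg
      have := (hx' ⟨g, hDM hg⟩).mp (Subgroup.mem_subgroupOf.mpr hg)
      exact Subgroup.mem_subgroupOf.mp this
    · intro hg
      have hgM : g ∈ M := by
        have h1 : (x' : G) * g * (x' : G)⁻¹ ∈ M := hDM hg
        have := M.mul_mem (M.mul_mem (M.inv_mem x'.2) h1) x'.2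
        simpa [mul_assoc] using this
      have : x' * ⟨g, hgM⟩ * x'⁻¹ ∈ D.subgroupOf M := by
        apply Subgroup.mem_subgroupOf.mpr
        simpa using hg
      exact Subgroup.mem_subgroupOf.mp ((hx' ⟨g, hgM⟩).mpr this)

theorem isCoatom_map (e : G ≃* G) {M : Subgroup G} (h : IsCoatom M) :
    IsCoatom (M.map e.toMonoidHom) := by
  constructor
  · intro htop
    apply h.1
    have := congrArg (Subgroup.comap e.toMonoidHom) htop
    rwa [Subgroup.comap_map_eq_self_of_injective
      (show Function.Injective e.toMonoidHom from e.injective), Subgroup.comap_top] at this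
  · intro K hK
    have hMle : M ≤ K.comap e.toMonoidHom := by
      rw [← Subgroup.comap_map_eq_self_of_injective
        (show Function.Injective e.toMonoidHom from e.injective) M]
      exact Subgroup.comap_mono hK.le
    have hMlt : M < K.comap e.toMonoidHom := by
      refine lt_of_le_of_ne hMle ?_
      intro hEq
      apply hK.ne
      rw [hEq, Subgroup.map_comap_eq_self_of_surjective
        (show Function.Surjective e.toMonoidHom from e.surjective)]
    have h3 := h.2 _ hMlt
    have h4 := congrArg (Subgroup.map e.toMonoidHom) h3
    rwa [Subgroup.map_comap_eq_self_of_surjective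
      (show Function.Surjective e.toMonoidHom from e.surjective),
      Subgroup.map_top_of_surjective _ e.surjective] at h4

theorem key : ∀ (N : ℕ) (G : Type u) [Group G] [Finite G] (n : ℕ),
    Nat.card G ≤ N → (∀ x y : G, engel x y n = 1) → Group.IsNilpotent G := by
  intro N
  induction N with
  | zero =>
    intro G _ _ n hle _
    have : 0 < Nat.card G := Nat.card_pos
    omega
  | succ N ih =>
    intro G _ _ n hcard hEng
    classical
    rcases Nat.eq_zero_or_pos n with rfl | hn
    · have : Subsingleton G := ⟨fun a b => by
        have ha : a = 1 := hEng a 1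
        have hb : b = 1 := hEng b 1
        rw [ha, hb]⟩
      exact Group.isNilpotent_of_subsingleton
    have hproper : ∀ M : Subgroup G, M ≠ ⊤ → Group.IsNilpotent M := by
      intro M hM
      refine ih M n ?_ (engel_subgroup hEng M)
      have := cardlt_top M hM
      omega
    have hcoatom : ∀ M : Subgroup G, IsCoatom M → M.Normal := by
      intro M hM
      by_contra hMnn
      -- M is self-normalizing
      have hself : (Subgroup.normalizer (M : Set G)) = M := by
        rcases (Subgroup.le_normalizer (H := M)).lt_or_eq with hlt | heq
        · rcases eq_or_ne (Subgroup.normalizer (M : Set G)) ⊤ with htop | hne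
          · exact absurd (Subgroup.normalizer_eq_top_iff.mp htop) hMnn
          · exact absurd (hM.2 _ hlt) hne
        · exact heq.symm
      have hMbot : M ≠ ⊥ := by
        rintro rfl
        exact hMnn ⟨fun n hn g => by simp_all [Subgroup.mem_bot]⟩
      -- pick a nontrivial z ∈ M and y ∉ M
      obtain ⟨z, hz, hz1⟩ : ∃ z, z ∈ M ∧ z ≠ 1 := by
        by_contra h
        push_neg at h
        apply hMbot
        ext g
        simp only [Subgroup.mem_bot]
        exact ⟨fun hg => by by_contra h1; exact h1 (h g hg), by rintro rfl; exact M.one_mem⟩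
      obtain ⟨y, hy⟩ : ∃ y, y ∉ M := by
        by_contra h
        push_neg at h
        exact hM.1 ((Subgroup.eq_top_iff' M).mpr h)
      -- Engel trick: find w ∉ M with ⁅w, z⁆ ∈ M
      set P : ℕ → Prop := fun j => engel y z j ∉ M with hPdef
      have hP0 : P 0 := hy
      set k := Nat.findGreatest P n with hk
      have hPk : P k := Nat.findGreatest_spec (Nat.zero_le n) hP0
      have hkn : k ≠ n := by
        intro h
        apply hPk
        rw [h, hEng y z]
        exact M.one_mem
      have hklt : k < n := lt_of_le_of_ne (Nat.findGreatest_le n) hkn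
      have hnext : engel y z (k + 1) ∈ M := by
        have := Nat.findGreatest_is_greatest (lt_add_one k) hklt
        rw [hPdef] at this
        simpa using this
      set w := engel y z k with hw
      have hwM : w ∉ M := hPk
      have hcz : ⁅w, z⁆ ∈ M := hnext
      have hconj : w * z * w⁻¹ ∈ M := by
        have := M.mul_mem hcz hz
        simpa [commutatorElement_def, mul_assoc] using this
      -- the conjugate coatom
      set M₂ := M.map (MulAut.conj w⁻¹).toMonoidHom with hM₂
      have hzM₂ : z ∈ M₂ := by
        rw [hM₂, Subgroup.mem_map_equiv, MulAut.conj_symm_apply]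
        simpa using hconj
      have hMM₂ : M ≠ M₂ := by
        intro h
        apply hwM
        rw [← hself]
        rw [Subgroup.mem_normalizer_iff]
        intro g
        nth_rewrite 1 [h]
        rw [hM₂, Subgroup.mem_map_equiv, MulAut.conj_symm_apply, inv_inv]
      have hMM₂bot : M ⊓ M₂ ≠ ⊥ := by
        intro h
        have : z ∈ M ⊓ M₂ := ⟨hz, hzM₂⟩
        rw [h, Subgroup.mem_bot] at this
        exact hz1 this
      -- the pool of bad pairs; choose one with maximal intersection
      set S : Set (Subgroup G × Subgroup G) :=
        {p | IsCoatom p.1 ∧ IsCoatom p.2 ∧ p.1 ≠ p.2 ∧ ¬p.1.Normal ∧ p.1 ⊓ p.2 ≠ ⊥} with hS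
      have hseed : (M, M₂) ∈ S :=
        ⟨hM, isCoatom_map _ hM, hMM₂, hMnn, hMM₂bot⟩
      obtain ⟨⟨M₁, M₂'⟩, hmem, hmax⟩ := Set.Finite.exists_maximalFor
        (fun p : Subgroup G × Subgroup G => Nat.card (p.1 ⊓ p.2 : Subgroup G)) S
        (Set.toFinite _) ⟨(M, M₂), hseed⟩
      obtain ⟨hc1, hc2, hne12, hnn1, hDbot⟩ := hmem
      set D := M₁ ⊓ M₂' with hD
      have hD1 : D < M₁ := by
        refine lt_of_le_of_ne inf_le_left ?_
        intro h
        have : M₁ ≤ M₂' := by rw [← h]; exact inf_le_right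
        exact hc2.1 (hc1.2 _ (lt_of_le_of_ne this hne12))
      have hD2 : D < M₂' := by
        refine lt_of_le_of_ne inf_le_right ?_
        intro h
        have : M₂' ≤ M₁ := by rw [← h]; exact inf_le_left
        exact hc1.1 (hc2.2 _ (lt_of_le_of_ne this (Ne.symm hne12)))
      obtain ⟨N₁, hDN₁, hN₁M, hN₁nor⟩ :=
        exists_gt_le_normalizer M₁ D (hproper M₁ hc1.1) hD1
      obtain ⟨N₂, hDN₂, hN₂M, hN₂nor⟩ :=
        exists_gt_le_normalizer M₂' D (hproper M₂' hc2.1) hD2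
      by_cases hDn : (Subgroup.normalizer (D : Set G)) = ⊤
      · -- D is a nontrivial proper normal subgroup; use the nilpotent quotient
        haveI hDnormal : D.Normal := Subgroup.normalizer_eq_top_iff.mp hDn
        set π := QuotientGroup.mk' D with hπ
        have hsurj : Function.Surjective π := QuotientGroup.mk'_surjective D
        have hcardQ : Nat.card (G ⧸ D) ≤ N := by
          have h1 : Nat.card G = Nat.card (G ⧸ D) * Nat.card D :=
            Subgroup.card_eq_card_quotient_mul_card_subgroup D
          have h2 : 1 < Nat.card D := by
            rw [Subgroup.one_lt_card_iff_ne_bot]; exact hDbot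
          have h3 : 0 < Nat.card (G ⧸ D) := Nat.card_pos
          nlinarith
        have hnilQ : Group.IsNilpotent (G ⧸ D) :=
          ih (G ⧸ D) n hcardQ (engel_surj π hsurj hEng)
        have ncQ : NormalizerCondition (G ⧸ D) :=
          @normalizerCondition_of_isNilpotent _ _ hnilQ
        set Mb := M₁.map π with hMb
        have hDM₁ : D ≤ M₁ := hD1.le
        have hcomap : Mb.comap π = M₁ := by
          rw [hMb, Subgroup.comap_map_eq, QuotientGroup.ker_mk', sup_eq_left.mpr hDM₁]
        have hMbtop : Mb ≠ ⊤ := by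
          intro h
          apply hc1.1
          rw [← hcomap, h, Subgroup.comap_top]
        have hltQ : Mb < (Subgroup.normalizer (Mb : Set (G ⧸ D))) := ncQ Mb (lt_top_iff_ne_top.mpr hMbtop)
        have hM₁lt : M₁ < (Subgroup.normalizer (Mb : Set (G ⧸ D))).comap π := by
          refine lt_of_le_of_ne (by rw [← hcomap]; exact Subgroup.comap_mono hltQ.le) ?_
          intro h
          apply hltQ.ne
          have := congrArg (Subgroup.map π) h
          rwa [hMb, Subgroup.map_comap_eq_self_of_surjective hsurj] at this
        have htop := hc1.2 _ hM₁lt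
        have : (Subgroup.normalizer (Mb : Set (G ⧸ D))) = ⊤ := by
          have := congrArg (Subgroup.map π) htop
          rwa [Subgroup.map_comap_eq_self_of_surjective hsurj,
            Subgroup.map_top_of_surjective _ hsurj] at this
        have hMbnormal : Mb.Normal := Subgroup.normalizer_eq_top_iff.mp this
        apply hnn1
        rw [← hcomap]
        exact Subgroup.Normal.comap hMbnormal π
      · -- the normalizer of D lies in a coatom M₃
        obtain ⟨M₃, hM₃, hHM₃⟩ := exists_coatom_ge _ hDn
        by_cases h31 : M₃ = M₁
        · apply hDN₂.not_ge
          have hN₂D : N₂ ≤ D := by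
            rw [hD]
            exact le_inf (le_trans (hN₂nor.trans hHM₃) (le_of_eq h31)) hN₂M
          exact hN₂D
        · have hpair : (M₁, M₃) ∈ S := by
            refine ⟨hc1, hM₃, fun h => h31 h.symm, hnn1, ?_⟩
            intro h
            have hN₁le : N₁ ≤ M₁ ⊓ M₃ := le_inf hN₁M (hN₁nor.trans hHM₃)
            have : N₁ = ⊥ := le_bot_iff.mp (h ▸ hN₁le)
            rw [this] at hDN₁
            exact (not_lt_bot hDN₁)
          have hlt2 : Nat.card D < Nat.card (M₁ ⊓ M₃ : Subgroup G) := by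
            calc Nat.card D < Nat.card N₁ := cardlt _ _ hDN₁
              _ ≤ Nat.card (M₁ ⊓ M₃ : Subgroup G) :=
                Subgroup.card_le_of_le (le_inf hN₁M (hN₁nor.trans hHM₃))
          have := hmax hpair hlt2.le
          simp only [← hD] at this
          omega
    exact ((isNilpotent_of_finite_tfae (G := G)).out 2 0).mp hcoatom

end Aux

/-- Zorn's theorem: every finite `n`-Engel group is nilpotent. -/
theorem stmt_13 {G : Type*} [Group G] [Finite G] (n : ℕ)
    (h : ∀ x y : G, engel x y n = 1) :
    Group.IsNilpotent G := by
  exact key (Nat.card G) G n le_rfl h
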